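/- Fix positive integers m and n and reals c₁,…,c_m ≥ 0. Let (W_{i,j}), for 1 ≤ i ≤ m and 1 ≤ j ≤ n, be independent standard circularly-symmetric complex Gaussian random variables. Define the information density S = Σ_{j=1}^{n} Σ_{i=1}^{m} [ log₂(1+cᵢ) + (1 − |√cᵢ·W_{i,j} − 1|²/(1+cᵢ))·log₂ e ]. Then E[S] = n·Σ_{i=1}^{m} log₂(1+cᵢ) and Var[S] = n·Σ_{i=1}^{m} (1 − 1/(1+cᵢ)²)·(log₂ e)². -/

import Mathlib

open MeasureTheory ProbabilityTheory

/-- The law of a standard circularly-symmetric complex Gaussian random variable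
`W = A + iB`, with `A`, `B` independent real Gaussians of mean `0` and variance `1/2`. -/
noncomputable def stdComplexGaussian : Measure ℂ :=
  Measure.map (fun p : ℝ × ℝ => (p.1 : ℂ) + (p.2 : ℂ) * Complex.I)
    ((gaussianReal 0 (1/2)).prod (gaussianReal 0 (1/2)))

/-!
Each summand is affine in `Q = |√c W - 1|² = (√c A - 1)² + (√c B)²`, a sum of squares of two
independent real Gaussians with variance `c/2` and means `-1` and `0`. For `X ~ N(μ, v)` the
moment generating function `exp (μ t + v t² / 2)` gives `E[X²] = μ² + v` and
`E[X⁴] = μ⁴ + 6 μ² v + 3 v²`, hence `Var[X²] = 4 μ² v + 2 v²`; so `E[Q] = 1 + c` and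
`Var[Q] = c² + 2c`. Linearity and independence of the `W_{i,j}` then sum these over the `m n`
channel uses.
-/

open scoped NNReal

namespace ProbabilityTheory

variable {μ : ℝ} {v : ℝ≥0}

lemma integral_pow_gaussianReal_eq_iteratedDeriv (n : ℕ) :
    ∫ x, x ^ n ∂gaussianReal μ v
      = iteratedDeriv n (fun t ↦ Real.exp (μ * t + v * t ^ 2 / 2)) 0 := by
  rw [← mgf_fun_id_gaussianReal, iteratedDeriv_mgf_zero (by simp)]
  rfl

lemma hasDerivAt_mul_exp_quadratic {P : ℝ → ℝ} {P' t : ℝ} (hP : HasDerivAt P P' t) :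
    HasDerivAt (fun t ↦ P t * Real.exp (μ * t + v * t ^ 2 / 2))
      ((P' + P t * (μ + v * t)) * Real.exp (μ * t + v * t ^ 2 / 2)) t := by
  have hq : HasDerivAt (fun t : ℝ ↦ μ * t + v * t ^ 2 / 2) (μ + v * t) t :=
    (((hasDerivAt_id t).const_mul μ).add (((hasDerivAt_pow 2 t).const_mul (v : ℝ)).div_const 2))
      |>.congr_deriv (by norm_num; ring)
  exact (hP.mul hq.exp).congr_deriv (by ring)

lemma iteratedDeriv_four_exp_quadratic :
    iteratedDeriv 4 (fun t ↦ Real.exp (μ * t + v * t ^ 2 / 2)) = fun t ↦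
      ((μ + v * t) ^ 4 + 6 * v * (μ + v * t) ^ 2 + 3 * v ^ 2)
        * Real.exp (μ * t + v * t ^ 2 / 2) := by
  set g : ℝ → ℝ := fun t ↦ Real.exp (μ * t + v * t ^ 2 / 2)
  have hm (t : ℝ) : HasDerivAt (fun t ↦ μ + v * t) v t :=
    ((hasDerivAt_id t).const_mul (v : ℝ)).const_add μ |>.congr_deriv (mul_one _)
  have h1 : iteratedDeriv 1 g = fun t ↦ (μ + v * t) * g t := by
    ext t
    rw [iteratedDeriv_one]
    simpa using (hasDerivAt_mul_exp_quadratic (hasDerivAt_const t (1 : ℝ))).deriv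
  have h2 : iteratedDeriv 2 g = fun t ↦ ((μ + v * t) ^ 2 + v) * g t := by
    ext t
    rw [iteratedDeriv_succ, h1]
    exact (hasDerivAt_mul_exp_quadratic (hm t)).deriv.trans (by simp only [g]; ring)
  have h3 : iteratedDeriv 3 g = fun t ↦ ((μ + v * t) ^ 3 + 3 * v * (μ + v * t)) * g t := by
    ext t
    rw [iteratedDeriv_succ, h2]
    exact (hasDerivAt_mul_exp_quadratic (((hm t).fun_pow 2).add_const _)).deriv.trans
      (by simp only [g]; ring)
  ext t
  rw [iteratedDeriv_succ, h3]
  exact (hasDerivAt_mul_exp_quadratic (((hm t).fun_pow 3).fun_add ((hm t).const_mul _))).deriv.trans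
    (by ring)

lemma integral_sq_gaussianReal : ∫ x, x ^ 2 ∂gaussianReal μ v = μ ^ 2 + v := by
  have h := variance_eq_sub (memLp_id_gaussianReal (μ := μ) (v := v) 2)
  rw [variance_id_gaussianReal] at h
  simp only [id_eq, integral_id_gaussianReal] at h
  change _ = ∫ x, x ^ 2 ∂gaussianReal μ v - μ ^ 2 at h
  linarith

lemma integral_pow_four_gaussianReal :
    ∫ x, x ^ 4 ∂gaussianReal μ v = μ ^ 4 + 6 * v * μ ^ 2 + 3 * v ^ 2 := by
  rw [integral_pow_gaussianReal_eq_iteratedDeriv, iteratedDeriv_four_exp_quadratic]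
  simp

lemma memLp_sq_gaussianReal : MemLp (fun x ↦ x ^ 2) 2 (gaussianReal μ v) := by
  rw [memLp_two_iff_integrable_sq (by fun_prop)]
  simpa [← pow_mul, Even.pow_abs ⟨2, rfl⟩] using
    (memLp_id_gaussianReal (μ := μ) (v := v) 4).integrable_norm_pow (by norm_num)

lemma variance_sq_gaussianReal :
    Var[fun x ↦ x ^ 2; gaussianReal μ v] = 4 * μ ^ 2 * v + 2 * v ^ 2 := by
  rw [variance_eq_sub memLp_sq_gaussianReal]
  change ∫ x, (x ^ 2) ^ 2 ∂gaussianReal μ v - (∫ x, x ^ 2 ∂gaussianReal μ v) ^ 2 = _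
  simp_rw [← pow_mul]
  rw [integral_pow_four_gaussianReal, integral_sq_gaussianReal]
  ring

lemma gaussianReal_map_const_mul_sub (a b : ℝ) :
    (gaussianReal μ v).map (fun x ↦ a * x - b)
      = gaussianReal (a * μ - b) (.mk (a ^ 2) (sq_nonneg a) * v) := by
  rw [show (fun x ↦ a * x - b) = (· - b) ∘ (a * ·) from rfl,
    ← Measure.map_map (measurable_sub_const b) (measurable_const_mul a),
    gaussianReal_map_const_mul, gaussianReal_map_sub_const]

lemma memLp_sq_const_mul_sub_gaussianReal (a b : ℝ) :
    MemLp (fun x ↦ (a * x - b) ^ 2) 2 (gaussianReal μ v) := by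
  have h := memLp_sq_gaussianReal (μ := a * μ - b) (v := .mk (a ^ 2) (sq_nonneg a) * v)
  rw [← gaussianReal_map_const_mul_sub] at h
  exact (memLp_map_measure_iff (by fun_prop) (by fun_prop)).1 h

lemma integral_sq_const_mul_sub_gaussianReal (a b : ℝ) :
    ∫ x, (a * x - b) ^ 2 ∂gaussianReal μ v = (a * μ - b) ^ 2 + a ^ 2 * v := by
  have h := integral_sq_gaussianReal (μ := a * μ - b) (v := .mk (a ^ 2) (sq_nonneg a) * v)
  rw [← gaussianReal_map_const_mul_sub, integral_map (by fun_prop) (by fun_prop)] at h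
  simpa using h

lemma variance_sq_const_mul_sub_gaussianReal (a b : ℝ) :
    Var[fun x ↦ (a * x - b) ^ 2; gaussianReal μ v]
      = 4 * (a * μ - b) ^ 2 * (a ^ 2 * v) + 2 * (a ^ 2 * v) ^ 2 := by
  have h := variance_sq_gaussianReal (μ := a * μ - b) (v := .mk (a ^ 2) (sq_nonneg a) * v)
  rw [← gaussianReal_map_const_mul_sub, variance_map (by fun_prop) (by fun_prop)] at h
  exact h

end ProbabilityTheory

open Complex in
lemma norm_ofReal_mul_sub_sq (s x y : ℝ) (b : ℂ) :
    ‖(s : ℂ) * (x + y * I) - b‖ ^ 2 = (s * x - b.re) ^ 2 + (s * y - b.im) ^ 2 := by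
  rw [Complex.sq_norm, normSq_apply]
  simp only [sub_re, mul_re, ofReal_re, add_re, I_re, mul_zero, ofReal_im, I_im, mul_one,
    sub_self, add_zero, add_im, mul_im, zero_add, zero_mul, sub_zero, sub_im]
  ring

instance isProbabilityMeasure_stdComplexGaussian : IsProbabilityMeasure stdComplexGaussian :=
  Measure.isProbabilityMeasure_map (by fun_prop)

section StdComplexGaussian

variable (s : ℝ) (b : ℂ)

lemma memLp_norm_ofReal_mul_sub_sq_stdComplexGaussian :
    MemLp (fun w ↦ ‖(s : ℂ) * w - b‖ ^ 2) 2 stdComplexGaussian := by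
  rw [stdComplexGaussian, memLp_map_measure_iff (by fun_prop) (by fun_prop)]
  simp only [Function.comp_def, norm_ofReal_mul_sub_sq]
  exact ((memLp_sq_const_mul_sub_gaussianReal s b.re).comp_fst _).add
    ((memLp_sq_const_mul_sub_gaussianReal s b.im).comp_snd _)

lemma integral_norm_ofReal_mul_sub_sq_stdComplexGaussian :
    ∫ w, ‖(s : ℂ) * w - b‖ ^ 2 ∂stdComplexGaussian = s ^ 2 + ‖b‖ ^ 2 := by
  rw [stdComplexGaussian, integral_map (by fun_prop) (by fun_prop)]
  simp only [norm_ofReal_mul_sub_sq]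
  rw [integral_add (((memLp_sq_const_mul_sub_gaussianReal s b.re).comp_fst _).integrable one_le_two)
      (((memLp_sq_const_mul_sub_gaussianReal s b.im).comp_snd _).integrable one_le_two),
    integral_fun_fst (fun x ↦ (s * x - b.re) ^ 2), integral_fun_snd (fun y ↦ (s * y - b.im) ^ 2),
    integral_sq_const_mul_sub_gaussianReal,
    integral_sq_const_mul_sub_gaussianReal, Complex.sq_norm, Complex.normSq_apply]
  simp only [one_div, probReal_univ, mul_zero, zero_sub, even_two, Even.neg_pow, NNReal.coe_inv,
    NNReal.coe_ofNat, smul_eq_mul, one_mul]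
  ring

lemma variance_norm_ofReal_mul_sub_sq_stdComplexGaussian :
    Var[fun w ↦ ‖(s : ℂ) * w - b‖ ^ 2; stdComplexGaussian] = s ^ 4 + 2 * s ^ 2 * ‖b‖ ^ 2 := by
  rw [stdComplexGaussian, variance_map (by fun_prop) (by fun_prop)]
  simp only [Function.comp_def, norm_ofReal_mul_sub_sq]
  rw [variance_add_prod (memLp_sq_const_mul_sub_gaussianReal s b.re)
      (memLp_sq_const_mul_sub_gaussianReal s b.im),
    variance_sq_const_mul_sub_gaussianReal, variance_sq_const_mul_sub_gaussianReal,
    Complex.sq_norm, Complex.normSq_apply]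
  simp only [mul_zero, zero_sub, even_two, Even.neg_pow, one_div, NNReal.coe_inv, NNReal.coe_ofNat]
  ring

end StdComplexGaussian

section SumOfComp

variable {Ω E ι : Type*} {mΩ : MeasurableSpace Ω} {P : Measure Ω} [MeasurableSpace E] [Fintype ι]
  {W : ι → Ω → E} {f : ι → E → ℝ}

lemma integral_sum_comp (hW : ∀ i, AEMeasurable (W i) P)
    (hf : ∀ i, Integrable (f i) (P.map (W i))) :
    ∫ ω, ∑ i, f i (W i ω) ∂P = ∑ i, ∫ x, f i x ∂(P.map (W i)) := by
  rw [integral_finsetSum (f := fun i ω ↦ f i (W i ω)) _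
    fun i _ ↦ (integrable_map_measure (hf i).1 (hW i)).1 (hf i)]
  exact Finset.sum_congr rfl fun i _ ↦ (integral_map (hW i) (hf i).1).symm

lemma variance_sum_comp_of_iIndepFun (hW : ∀ i, AEMeasurable (W i) P) (hind : iIndepFun W P)
    (hf : ∀ i, MemLp (f i) 2 (P.map (W i))) :
    Var[fun ω ↦ ∑ i, f i (W i ω); P] = ∑ i, Var[f i; P.map (W i)] := by
  have hfW (i : ι) : MemLp (f i ∘ W i) 2 P := (memLp_map_measure_iff (hf i).1 (hW i)).1 (hf i)
  have hpair : Set.Pairwise (Finset.univ : Finset ι) fun i j ↦ (f i ∘ W i) ⟂ᵢ[P] (f j ∘ W j) :=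
    fun i _ j _ hij ↦ (hind.comp₀ f hW fun i ↦ (hf i).1.aemeasurable).indepFun hij
  have h := IndepFun.variance_sum (fun i _ ↦ hfW i) hpair
  rw [Finset.sum_fn] at h
  exact h.trans (Finset.sum_congr rfl fun i _ ↦ (variance_map (hf i).1.aemeasurable (hW i)).symm)

end SumOfComp

noncomputable def infoDensityTerm (c : ℝ) (w : ℂ) : ℝ :=
  Real.logb 2 (1 + c)
    + (1 - ‖(Real.sqrt c : ℂ) * w - 1‖ ^ 2 / (1 + c)) * Real.logb 2 (Real.exp 1)

lemma infoDensityTerm_eq_affine (c : ℝ) :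
    infoDensityTerm c = fun w ↦
      -(Real.logb 2 (Real.exp 1) / (1 + c)) * ‖(Real.sqrt c : ℂ) * w - 1‖ ^ 2
        + (Real.logb 2 (1 + c) + Real.logb 2 (Real.exp 1)) := by
  ext w
  rw [infoDensityTerm]
  ring

lemma memLp_infoDensityTerm (c : ℝ) : MemLp (infoDensityTerm c) 2 stdComplexGaussian := by
  rw [infoDensityTerm_eq_affine]
  exact ((memLp_norm_ofReal_mul_sub_sq_stdComplexGaussian _ 1).const_mul _).add (memLp_const _)

lemma integral_infoDensityTerm {c : ℝ} (hc : 0 ≤ c) :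
    ∫ w, infoDensityTerm c w ∂stdComplexGaussian = Real.logb 2 (1 + c) := by
  rw [infoDensityTerm_eq_affine, integral_add
      (((memLp_norm_ofReal_mul_sub_sq_stdComplexGaussian _ 1).integrable one_le_two).const_mul _)
      (integrable_const _), integral_const_mul,
    integral_norm_ofReal_mul_sub_sq_stdComplexGaussian, Real.sq_sqrt hc]
  simp only [norm_one, one_pow, neg_mul, integral_const, probReal_univ, smul_eq_mul, one_mul]
  field_simp
  ring

lemma variance_infoDensityTerm {c : ℝ} (hc : 0 ≤ c) :
    Var[infoDensityTerm c; stdComplexGaussian]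
      = (1 - 1 / (1 + c) ^ 2) * Real.logb 2 (Real.exp 1) ^ 2 := by
  rw [infoDensityTerm_eq_affine, variance_add_const (by fun_prop), variance_const_mul,
    variance_norm_ofReal_mul_sub_sq_stdComplexGaussian, Real.sq_sqrt hc]
  have h4 : √c ^ 4 = c ^ 2 := by rw [show 4 = 2 * 2 from rfl, pow_mul, Real.sq_sqrt hc]
  rw [h4, norm_one]
  field_simp
  ring

theorem information_density_moments_general
    {Ω : Type*} [MeasureSpace Ω]
    (m n : ℕ)
    (c : Fin m → ℝ) (hc : ∀ i, 0 ≤ c i)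
    (W : Fin m × Fin n → Ω → ℂ)
    (hWm : ∀ p, Measurable (W p))
    (hWlaw : ∀ p, Measure.map (W p) ℙ = stdComplexGaussian)
    (hWindep : iIndepFun W ℙ) :
    (∫ ω, (∑ j : Fin n, ∑ i : Fin m,
        (Real.logb 2 (1 + c i)
          + (1 - ‖(Real.sqrt (c i) : ℂ) * W (i, j) ω - 1‖ ^ 2 / (1 + c i))
            * Real.logb 2 (Real.exp 1))) ∂ℙ)
      = n * ∑ i : Fin m, Real.logb 2 (1 + c i) ∧
    variance (fun ω => ∑ j : Fin n, ∑ i : Fin m,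
        (Real.logb 2 (1 + c i)
          + (1 - ‖(Real.sqrt (c i) : ℂ) * W (i, j) ω - 1‖ ^ 2 / (1 + c i))
            * Real.logb 2 (Real.exp 1))) ℙ
      = n * ∑ i : Fin m, (1 - 1 / (1 + c i) ^ 2) * (Real.logb 2 (Real.exp 1)) ^ 2 := by
  have hS (ω : Ω) : ∑ j, ∑ i, infoDensityTerm (c i) (W (i, j) ω)
      = ∑ p, infoDensityTerm (c p.1) (W p ω) := by
    rw [Fintype.sum_prod_type, Finset.sum_comm]
  simp only [← infoDensityTerm.eq_1, hS]
  have hW (p : Fin m × Fin n) : AEMeasurable (W p) ℙ := (hWm p).aemeasurable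
  rw [integral_sum_comp hW fun p ↦ hWlaw p ▸ (memLp_infoDensityTerm _).integrable one_le_two,
    variance_sum_comp_of_iIndepFun hW hWindep fun p ↦ hWlaw p ▸ memLp_infoDensityTerm _]
  simp only [hWlaw, integral_infoDensityTerm (hc _), variance_infoDensityTerm (hc _)]
  constructor <;> simp [Fintype.sum_prod_type, Finset.mul_sum]

/-- For `m, n` positive, `c₁, …, c_m ≥ 0`, and `(W_{i,j})` i.i.d. standard
circularly-symmetric complex Gaussians, the information density
`S = Σ_j Σ_i [log₂(1+cᵢ) + (1 − |√cᵢ·W_{i,j} − 1|²/(1+cᵢ))·log₂ e]` satisfies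
`E[S] = n·Σᵢ log₂(1+cᵢ)` and `Var[S] = n·Σᵢ (1 − 1/(1+cᵢ)²)·(log₂ e)²`. -/
theorem information_density_moments
    {Ω : Type*} [MeasureSpace Ω] [IsProbabilityMeasure (ℙ : Measure Ω)]
    (m n : ℕ) (hm : 0 < m) (hn : 0 < n)
    (c : Fin m → ℝ) (hc : ∀ i, 0 ≤ c i)
    (W : Fin m × Fin n → Ω → ℂ)
    (hWm : ∀ p, Measurable (W p))
    (hWlaw : ∀ p, Measure.map (W p) ℙ = stdComplexGaussian)
    (hWindep : iIndepFun W ℙ) :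
    (∫ ω, (∑ j : Fin n, ∑ i : Fin m,
        (Real.logb 2 (1 + c i)
          + (1 - ‖(Real.sqrt (c i) : ℂ) * W (i, j) ω - 1‖ ^ 2 / (1 + c i))
            * Real.logb 2 (Real.exp 1))) ∂ℙ)
      = n * ∑ i : Fin m, Real.logb 2 (1 + c i) ∧
    variance (fun ω => ∑ j : Fin n, ∑ i : Fin m,
        (Real.logb 2 (1 + c i)
          + (1 - ‖(Real.sqrt (c i) : ℂ) * W (i, j) ω - 1‖ ^ 2 / (1 + c i))
            * Real.logb 2 (Real.exp 1))) ℙ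
      = n * ∑ i : Fin m, (1 - 1 / (1 + c i) ^ 2) * (Real.logb 2 (Real.exp 1)) ^ 2 :=
  information_density_moments_general m n c hc W hWm hWlaw hWindep
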